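/- arXiv:2404.18622 — 3 statements merged into one kernel-verified Lean document; each statement's English description precedes it below -/
import Mathlib

section
/- For every n ≥ 5, the elliptic Sombor characteristic polynomial of the path graph P_n satisfies φ_ESO(P_n,λ) = λ²·Λ_{n−2} − 90λ·Λ_{n−3} + 2025·Λ_{n−4}, where Λ_1 = λ, Λ_2 = λ² − 128, and Λ_k = λ·Λ_{k−1} − 128·Λ_{k−2} for k ≥ 3. -/
open Polynomial Real

open scoped Classical in
/-- The elliptic Sombor matrix of a simple graph. -/
noncomputable def esoMatrix {V : Type*} [Fintype V] (G : SimpleGraph V) : Matrix V V ℝ :=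
  Matrix.of fun i j =>
    if G.Adj i j then
      ((G.degree i : ℝ) + (G.degree j : ℝ)) *
        Real.sqrt ((G.degree i : ℝ) ^ 2 + (G.degree j : ℝ) ^ 2)
    else 0

theorem esoMatrix_isHermitian {V : Type*} [Fintype V] (G : SimpleGraph V) :
    (esoMatrix G).IsHermitian := by
  classical
  show (esoMatrix G).conjTranspose = esoMatrix G
  ext i j
  simp only [esoMatrix, Matrix.conjTranspose_apply, Matrix.of_apply, star_trivial]
  by_cases h : G.Adj i j
  · rw [if_pos h, if_pos (G.adj_symm h), add_comm ((G.degree j : ℝ)) ((G.degree i : ℝ)),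
      add_comm (((G.degree j : ℝ)) ^ 2) (((G.degree i : ℝ)) ^ 2)]
  · rw [if_neg h, if_neg (fun h' => h (G.adj_symm h'))]

/-- The elliptic Sombor characteristic polynomial. -/
noncomputable def esoCharpoly {V : Type*} [Fintype V] [DecidableEq V] (G : SimpleGraph V) :
    Polynomial ℝ := (esoMatrix G).charpoly

/-- The elliptic Sombor energy: sum of absolute values of eigenvalues of the
elliptic Sombor matrix. -/
noncomputable def esoEnergy {V : Type*} [Fintype V] [DecidableEq V] (G : SimpleGraph V) : ℝ :=
  ∑ i, |(esoMatrix_isHermitian G).eigenvalues i|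

/-- The auxiliary polynomial sequence: `Λ₁ = λ`, `Λ₂ = λ² - 128`, and
`Λ_k = λΛ_{k-1} - 128Λ_{k-2}` for `k ≥ 3`. -/
noncomputable def Lam : ℕ → Polynomial ℝ
  | 0 => 1
  | 1 => X
  | (k + 2) => X * Lam (k + 1) - C 128 * Lam k

/-! The characteristic matrix `λI - A_ESO(P_n)` is symmetric tridiagonal, with off-diagonal
entries `-3√5` at the two pendant edges and `-4√8` elsewhere. Expanding a tridiagonal
determinant along its first row gives `D_{k+2} = λ D_{k+1} - b₀² D_k`, so only the squared
weights `45` and `128` matter: if all of them are `128` the determinant is `Λ_k`; if only the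
last one is `a²` it is `λ Λ_{k+1} - a² Λ_k`; one more expansion at the first pendant edge gives
the formula, with `90 = 45 + 45` and `2025 = 45²`. -/

def symTridiagonal {R : Type*} [Zero R] (d b : ℕ → R) (n : ℕ) : Matrix (Fin n) (Fin n) R :=
  Matrix.of fun i j =>
    if (i : ℕ) = j then d i else if (i : ℕ) + 1 = j ∨ (j : ℕ) + 1 = i then b (min i j) else 0

section symTridiagonal

variable {R : Type*} [CommRing R] (d b : ℕ → R)

theorem det_symTridiagonal_one : (symTridiagonal d b 1).det = d 0 := by
  simp [symTridiagonal]

theorem symTridiagonal_submatrix_succ (n : ℕ) :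
    (symTridiagonal d b (n + 1)).submatrix Fin.succ Fin.succ =
      symTridiagonal (fun k => d (k + 1)) (fun k => b (k + 1)) n := by
  ext i j
  simp only [Matrix.submatrix_apply, symTridiagonal, Matrix.of_apply, Fin.val_succ]
  split_ifs <;> first | rfl | omega | (congr 1; omega)

theorem det_symTridiagonal_add_two (n : ℕ) :
    (symTridiagonal d b (n + 2)).det =
      d 0 * (symTridiagonal (fun k => d (k + 1)) (fun k => b (k + 1)) (n + 1)).det -
        b 0 ^ 2 * (symTridiagonal (fun k => d (k + 2)) (fun k => b (k + 2)) n).det := by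
  set M := symTridiagonal d b (n + 2)
  set N := M.submatrix Fin.succ (Fin.succ (0 : Fin (n + 1))).succAbove
  have hN : N.det = b 0 * (symTridiagonal (fun k => d (k + 2)) (fun k => b (k + 2)) n).det := by
    have hminor : N.submatrix (0 : Fin (n + 1)).succAbove Fin.succ =
        symTridiagonal (fun k => d (k + 2)) (fun k => b (k + 2)) n := by
      rw [Fin.succAbove_zero, Matrix.submatrix_submatrix]
      have hcomp : (Fin.succ (0 : Fin (n + 1))).succAbove ∘ Fin.succ =
          Fin.succ ∘ (Fin.succ : Fin n → Fin (n + 1)) := by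
        funext j
        simp
      rw [hcomp, ← Matrix.submatrix_submatrix, symTridiagonal_submatrix_succ,
        symTridiagonal_submatrix_succ]
    rw [Matrix.det_succ_column_zero, Fin.sum_univ_succ, hminor]
    simp [N, M, symTridiagonal]
  have hM₀₀ : M 0 0 = d 0 := by simp [M, symTridiagonal]
  have hM₀₁ : M 0 (Fin.succ 0) = b 0 := by simp [M, symTridiagonal]
  have hM₀ : ∀ j : Fin n, M 0 j.succ.succ = 0 := by simp [M, symTridiagonal]
  rw [Matrix.det_succ_row_zero, Fin.sum_univ_succ, Fin.sum_univ_succ, Fin.succAbove_zero,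
    symTridiagonal_submatrix_succ, hN, hM₀₀, hM₀₁]
  simp only [hM₀, mul_zero, zero_mul, Finset.sum_const_zero, add_zero, Fin.val_zero,
    Fin.val_succ, pow_zero, zero_add, pow_one]
  ring

end symTridiagonal

theorem charmatrix_symTridiagonal {R : Type*} [CommRing R] (d b : ℕ → R) (n : ℕ) :
    (symTridiagonal d b n).charmatrix =
      symTridiagonal (fun k => X - C (d k)) (fun k => -C (b k)) n := by
  ext i j
  by_cases h : i = j
  · subst h
    simp [Matrix.charmatrix_apply_eq, symTridiagonal]
  · have h' : (i : ℕ) ≠ j := Fin.val_ne_of_ne h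
    simp only [Matrix.charmatrix_apply_ne _ _ _ h, symTridiagonal, Matrix.of_apply, if_neg h']
    split_ifs <;> simp

theorem det_symTridiagonal_X_eq_Lam (b : ℕ → ℝ[X]) (k : ℕ)
    (hb : ∀ i, i + 1 < k → b i ^ 2 = C 128) : (symTridiagonal (fun _ => X) b k).det = Lam k := by
  induction k using Nat.twoStepInduction generalizing b with
  | zero => simp [Lam]
  | one => rw [det_symTridiagonal_one, Lam]
  | more k ih₀ ih₁ =>
    rw [det_symTridiagonal_add_two, hb 0 (by omega),
      ih₁ _ fun i hi => hb (i + 1) (by omega), ih₀ _ fun i hi => hb (i + 2) (by omega), Lam]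

theorem det_symTridiagonal_X_of_last (b : ℕ → ℝ[X]) (k : ℕ) (hb : ∀ i < k, b i ^ 2 = C 128) :
    (symTridiagonal (fun _ => X) b (k + 2)).det = X * Lam (k + 1) - b k ^ 2 * Lam k := by
  induction k using Nat.twoStepInduction generalizing b with
  | zero =>
    rw [det_symTridiagonal_add_two, det_symTridiagonal_one, Matrix.det_fin_zero, Lam, Lam]
  | one =>
    rw [det_symTridiagonal_add_two, det_symTridiagonal_add_two, det_symTridiagonal_one,
      Matrix.det_fin_zero, hb 0 (by omega)]
    simp only [Lam]
    ring
  | more k ih₀ ih₁ =>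
    rw [det_symTridiagonal_add_two, hb 0 (by omega),
      ih₁ _ fun i hi => hb (i + 1) (by omega), ih₀ _ fun i hi => hb (i + 2) (by omega)]
    simp only [Lam]
    ring

theorem det_symTridiagonal_X_of_ends (b : ℕ → ℝ[X]) (k : ℕ)
    (hb : ∀ i, 0 < i → i < k + 2 → b i ^ 2 = C 128) :
    (symTridiagonal (fun _ => X) b (k + 4)).det =
      X ^ 2 * Lam (k + 2) - (b 0 ^ 2 + b (k + 2) ^ 2) * X * Lam (k + 1) +
        b 0 ^ 2 * b (k + 2) ^ 2 * Lam k := by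
  rw [det_symTridiagonal_add_two,
    det_symTridiagonal_X_of_last _ (k + 1) fun i hi => hb (i + 1) (by omega) (by omega),
    det_symTridiagonal_X_of_last _ k fun i hi => hb (i + 2) (by omega) (by omega)]
  ring

namespace SimpleGraph

theorem pathGraph_degree {n : ℕ} (hn : 2 ≤ n) (i : Fin n)
    [Fintype ((pathGraph n).neighborSet i)] :
    (pathGraph n).degree i = if (i : ℕ) = 0 ∨ (i : ℕ) = n - 1 then 1 else 2 := by
  classical
  have hi := i.isLt
  rw [← card_neighborFinset_eq_degree]
  by_cases h₀ : (i : ℕ) = 0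
  · rw [if_pos (.inl h₀), Finset.card_eq_one]
    refine ⟨⟨1, by omega⟩, Finset.ext fun a => ?_⟩
    simp only [mem_neighborFinset, pathGraph_adj, Finset.mem_singleton, Fin.ext_iff]
    omega
  by_cases h₁ : (i : ℕ) = n - 1
  · rw [if_pos (.inr h₁), Finset.card_eq_one]
    refine ⟨⟨n - 2, by omega⟩, Finset.ext fun a => ?_⟩
    simp only [mem_neighborFinset, pathGraph_adj, Finset.mem_singleton, Fin.ext_iff]
    omega
  rw [if_neg (by tauto), Finset.card_eq_two]
  refine ⟨⟨i - 1, by omega⟩, ⟨i + 1, by omega⟩, by simp [Fin.ext_iff],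
    Finset.ext fun a => ?_⟩
  simp only [mem_neighborFinset, pathGraph_adj, Finset.mem_insert, Finset.mem_singleton,
    Fin.ext_iff]
  omega

end SimpleGraph

theorem esoMatrix_pathGraph {n : ℕ} (hn : 3 ≤ n) :
    esoMatrix (SimpleGraph.pathGraph n) =
      symTridiagonal 0 (fun k => if k = 0 ∨ k = n - 2 then 3 * √5 else 4 * √8) n := by
  ext i j
  simp only [esoMatrix, symTridiagonal, Matrix.of_apply, SimpleGraph.pathGraph_adj,
    SimpleGraph.pathGraph_degree (by omega : 2 ≤ n), Pi.zero_apply]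
  split_ifs <;> first | omega | norm_num

theorem eso_charpoly_path (n : ℕ) (hn : 5 ≤ n) :
    esoCharpoly (SimpleGraph.pathGraph n) =
      X ^ 2 * Lam (n - 2) - C 90 * X * Lam (n - 3) + C 2025 * Lam (n - 4) := by
  obtain ⟨k, rfl⟩ : ∃ k, n = k + 4 := ⟨n - 4, by omega⟩
  show _ = X ^ 2 * Lam (k + 2) - C 90 * X * Lam (k + 1) + C 2025 * Lam k
  set b : ℕ → ℝ[X] := fun i => -C (if i = 0 ∨ i = k + 2 then 3 * √5 else 4 * √8)
  have hb_sq : ∀ i, b i ^ 2 = if i = 0 ∨ i = k + 2 then C 45 else C 128 := by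
    intro i
    simp only [b, neg_sq, ← C_pow]
    split_ifs <;> norm_num [mul_pow]
  have hchar : (esoMatrix (SimpleGraph.pathGraph (k + 4))).charmatrix =
      symTridiagonal (fun _ => X) b (k + 4) := by
    rw [esoMatrix_pathGraph (by omega), charmatrix_symTridiagonal]
    simp [b]
  rw [esoCharpoly, Matrix.charpoly, hchar,
    det_symTridiagonal_X_of_ends b k fun i hi hik => by rw [hb_sq, if_neg (by omega)],
    hb_sq, hb_sq, if_pos (.inl rfl), if_pos (.inr rfl), ← C_add, ← C_mul]
  norm_num
end

section
/- For every n ≥ 2, the elliptic Sombor energy of the star graph S_n = K_{1,n−1} is E_ESO(S_n) = 2n√((n−1)(n²−2n+2)). -/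
/-! The elliptic Sombor matrix of `K_{p,q}` is `(p + q) √(p² + q²)` times its adjacency matrix,
so it is symmetric with trace `0` and rank at most `2`. Its nonzero eigenvalues are therefore
`±μ`, and its energy `2|μ|` equals `√(2 tr(A²))`, where `tr(A²) = (p + q)²(p² + q²) · 2pq`.
The star `S_n` is `K_{1,n-1}`. -/

open Polynomial Real

/-- The star graph `S_n = K_{1,n-1}` on `n` vertices. -/
def starGraph (n : ℕ) : SimpleGraph (Fin 1 ⊕ Fin (n - 1)) :=
  completeBipartiteGraph (Fin 1) (Fin (n - 1))

theorem Finset.sum_abs_eq_sqrt_two_mul_sum_sq_of_card_le_two {ι : Type*} [DecidableEq ι]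
    {s : Finset ι} (hs : s.card ≤ 2) {f : ι → ℝ} (hf : ∑ i ∈ s, f i = 0) :
    ∑ i ∈ s, |f i| = √(2 * ∑ i ∈ s, f i ^ 2) := by
  interval_cases h : s.card
  · simp [Finset.card_eq_zero.1 h]
  · obtain ⟨a, rfl⟩ := Finset.card_eq_one.1 h
    simp_all
  · obtain ⟨a, b, hab, hs⟩ := Finset.card_eq_two.1 h
    rw [hs, Finset.sum_pair hab] at hf ⊢
    rw [Finset.sum_pair hab, eq_neg_of_add_eq_zero_right hf, abs_neg, neg_sq,
      show 2 * (f a ^ 2 + f a ^ 2) = (|f a| + |f a|) ^ 2 by rw [← sq_abs]; ring,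
      Real.sqrt_sq (by positivity)]

namespace Matrix

variable {m n K : Type*} [Fintype n]

theorem rank_add_le [Field K] (A B : Matrix m n K) : (A + B).rank ≤ A.rank + B.rank := by
  rw [rank, rank, rank, mulVecLin_add]
  exact (Submodule.finrank_mono (LinearMap.range_add_le _ _)).trans
    (Submodule.finrank_add_le_finrank_add_finrank _ _)

theorem rank_smul_le [Field K] (c : K) (A : Matrix m n K) : (c • A).rank ≤ A.rank := by
  classical
  simpa [mul_smul] using rank_mul_le_left A (c • 1 : Matrix n n K)

theorem IsHermitian.trace_mul_self_eq_sum_sq {𝕜 : Type*} [RCLike 𝕜] [DecidableEq n]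
    {A : Matrix n n 𝕜} (hA : A.IsHermitian) :
    (A * A).trace = ∑ i, (hA.eigenvalues i : 𝕜) ^ 2 := by
  conv_lhs => rw [hA.spectral_theorem, ← map_mul, Unitary.conjStarAlgAut_apply]
  rw [trace_mul_cycle, UnitaryGroup.star_mul_self, one_mul, diagonal_mul_diagonal,
    trace_diagonal]
  simp [sq]

theorem IsHermitian.sum_abs_eigenvalues_eq_sqrt_of_rank_le_two [DecidableEq n]
    {A : Matrix n n ℝ} (hA : A.IsHermitian) (htr : A.trace = 0) (hrk : A.rank ≤ 2) :
    ∑ i, |hA.eigenvalues i| = √(2 * (A * A).trace) := by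
  set s := Finset.univ.filter fun i => hA.eigenvalues i ≠ 0
  have hs : s.card ≤ 2 := by
    rwa [← Fintype.card_subtype, ← hA.rank_eq_card_non_zero_eigs]
  have hsum : ∀ g : ℝ → ℝ, g 0 = 0 → ∑ i ∈ s, g (hA.eigenvalues i) = ∑ i, g (hA.eigenvalues i) :=
    fun g hg => Finset.sum_filter_of_ne fun i _ h hi => h (by rw [hi, hg])
  have hs0 : ∑ i ∈ s, hA.eigenvalues i = 0 := by
    simpa [hA.trace_eq_sum_eigenvalues, hsum (fun x => x) rfl] using htr
  rw [← hsum (|·|) abs_zero, Finset.sum_abs_eq_sqrt_two_mul_sum_sq_of_card_le_two hs hs0,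
    hsum (· ^ 2) (zero_pow two_ne_zero), hA.trace_mul_self_eq_sum_sq]
  simp

end Matrix

namespace SimpleGraph

variable {α β : Type*}

theorem degree_completeBipartiteGraph_inl [Fintype β] (a : α)
    [Fintype ((completeBipartiteGraph α β).neighborSet (.inl a))] :
    (completeBipartiteGraph α β).degree (.inl a) = Fintype.card β := by
  rw [degree, show (completeBipartiteGraph α β).neighborFinset (.inl a) =
      Finset.univ.map .inr by ext (_ | _) <;> simp]
  simp

theorem degree_completeBipartiteGraph_inr [Fintype α] (b : β)
    [Fintype ((completeBipartiteGraph α β).neighborSet (.inr b))] :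
    (completeBipartiteGraph α β).degree (.inr b) = Fintype.card α := by
  rw [degree, show (completeBipartiteGraph α β).neighborFinset (.inr b) =
      Finset.univ.map .inl by ext (_ | _) <;> simp]
  simp

variable [DecidableRel (completeBipartiteGraph α β).Adj]

theorem adjMatrix_completeBipartiteGraph (R : Type*) [Semiring R] :
    (completeBipartiteGraph α β).adjMatrix R =
      Matrix.vecMulVec (Sum.elim 1 0) (Sum.elim 0 1) +
        Matrix.vecMulVec (Sum.elim 0 1) (Sum.elim 1 0) := by
  ext (_ | _) (_ | _) <;> simp [Matrix.vecMulVec_apply]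

variable [Fintype α] [Fintype β]

theorem rank_adjMatrix_completeBipartiteGraph_le (K : Type*) [Field K] :
    ((completeBipartiteGraph α β).adjMatrix K).rank ≤ 2 := by
  rw [adjMatrix_completeBipartiteGraph]
  exact (Matrix.rank_add_le _ _).trans
    (add_le_add (Matrix.rank_vecMulVec_le _ _) (Matrix.rank_vecMulVec_le _ _))

theorem trace_adjMatrix_mul_self_completeBipartiteGraph (R : Type*) [NonAssocSemiring R] :
    ((completeBipartiteGraph α β).adjMatrix R * (completeBipartiteGraph α β).adjMatrix R).trace =
      2 * Fintype.card α * Fintype.card β := by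
  simp only [Matrix.trace, Matrix.diag, adjMatrix_mul_self_apply_self, Fintype.sum_sum_type,
    degree_completeBipartiteGraph_inl, degree_completeBipartiteGraph_inr, Finset.sum_const,
    Finset.card_univ, nsmul_eq_mul]
  rw [Nat.cast_comm (Fintype.card β), two_mul, add_mul]

end SimpleGraph

section

open SimpleGraph

variable {α β : Type*} [Fintype α] [Fintype β]

theorem esoMatrix_completeBipartiteGraph [DecidableRel (completeBipartiteGraph α β).Adj] :
    esoMatrix (completeBipartiteGraph α β) =
      ((Fintype.card α + Fintype.card β) * √(Fintype.card α ^ 2 + Fintype.card β ^ 2) : ℝ) •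
        (completeBipartiteGraph α β).adjMatrix ℝ := by
  ext (_ | _) (_ | _) <;>
    simp [esoMatrix, degree_completeBipartiteGraph_inl, degree_completeBipartiteGraph_inr,
      add_comm]

theorem esoEnergy_completeBipartiteGraph [DecidableEq α] [DecidableEq β] :
    esoEnergy (completeBipartiteGraph α β) =
      2 * (Fintype.card α + Fintype.card β) *
        √(Fintype.card α * Fintype.card β * (Fintype.card α ^ 2 + Fintype.card β ^ 2)) := by
  classical
  set p : ℝ := (Fintype.card α : ℝ)
  set q : ℝ := (Fintype.card β : ℝ)
  have hA : esoMatrix (completeBipartiteGraph α β) =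
      ((p + q) * √(p ^ 2 + q ^ 2)) • (completeBipartiteGraph α β).adjMatrix ℝ :=
    esoMatrix_completeBipartiteGraph
  rw [esoEnergy, Matrix.IsHermitian.sum_abs_eigenvalues_eq_sqrt_of_rank_le_two]
  · rw [hA, smul_mul_smul_comm, Matrix.trace_smul, trace_adjMatrix_mul_self_completeBipartiteGraph,
      smul_eq_mul]
    calc √(2 * ((p + q) * √(p ^ 2 + q ^ 2) * ((p + q) * √(p ^ 2 + q ^ 2)) * (2 * p * q)))
        = √((2 * (p + q)) ^ 2 * (p * q * (p ^ 2 + q ^ 2))) := by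
          rw [mul_mul_mul_comm _ (√_), Real.mul_self_sqrt (by positivity)]
          ring_nf
      _ = 2 * (p + q) * √(p * q * (p ^ 2 + q ^ 2)) := by
          rw [Real.sqrt_mul (by positivity), Real.sqrt_sq (by positivity)]
  · simp [hA]
  · rw [hA]
    exact (Matrix.rank_smul_le _ _).trans (rank_adjMatrix_completeBipartiteGraph_le ℝ)

end

theorem eso_energy_star (n : ℕ) (hn : 2 ≤ n) :
    esoEnergy (starGraph n) =
      2 * n * Real.sqrt (((n : ℝ) - 1) * ((n : ℝ) ^ 2 - 2 * n + 2)) := by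
  have hcast : ((n - 1 : ℕ) : ℝ) = n - 1 := Nat.cast_pred (by omega)
  rw [starGraph, esoEnergy_completeBipartiteGraph]
  simp only [Fintype.card_fin, Nat.cast_one, hcast]
  ring_nf
end

section
/- For natural numbers m, n ≥ 2, the elliptic Sombor energy of the complete bipartite graph K_{m,n} is E_ESO(K_{m,n}) = 2(m+n)√(mn(m²+n²)). -/
open Polynomial Real

/-! Every edge of `K_{m,n}` joins a vertex of degree `n` to one of degree `m`, so its elliptic
Sombor matrix is `c • A` with `c = (m + n)√(m² + n²)` and `A` the adjacency matrix. Since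
`A³ = mn • A` and `tr A² = 2mn`, each eigenvalue `λ` of `c • A` satisfies `λ³ = a²λ` for
`a = c√(mn)`, i.e. `λ ∈ {0, ±a}`. Hence `a ∑ |λ| = ∑ λ² = tr (c • A)² = 2a²`, and the energy
is `2a`. -/

lemma mul_abs_eq_sq_of_pow_three_eq {a x : ℝ} (ha : 0 ≤ a) (h : x ^ 3 = a ^ 2 * x) :
    a * |x| = x ^ 2 := by
  have hfactor : x * (x ^ 2 - a ^ 2) = 0 := by linear_combination h
  rcases mul_eq_zero.mp hfactor with hx | hx
  · simp [hx]
  · have habs : |x| = a := by rw [← abs_of_nonneg ha, ← sq_eq_sq_iff_abs_eq_abs]; linarith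
    rw [← habs, abs_mul_abs_self, sq]

namespace Matrix.IsHermitian

variable {𝕜 n : Type*} [RCLike 𝕜] [Fintype n] [DecidableEq n] {A : Matrix n n 𝕜}

lemma trace_mul_self (hA : A.IsHermitian) :
    (A * A).trace = ∑ i, (hA.eigenvalues i : 𝕜) ^ 2 := by
  conv_lhs => rw [hA.spectral_theorem, ← map_mul, Unitary.conjStarAlgAut_apply, trace_mul_cycle,
    Unitary.coe_star_mul_self, one_mul, diagonal_mul_diagonal, trace_diagonal]
  simp [sq]

lemma eigenvalues_pow_three_of_mul_mul_self_eq_smul (hA : A.IsHermitian) {t : ℝ}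
    (h : A * A * A = t • A) (i : n) : hA.eigenvalues i ^ 3 = t * hA.eigenvalues i := by
  set v := ⇑(hA.eigenvectorBasis i)
  have hv : A *ᵥ v = hA.eigenvalues i • v := hA.mulVec_eigenvectorBasis i
  have hv0 : v ≠ 0 := by simpa [v] using hA.eigenvectorBasis.orthonormal.ne_zero i
  have key : (hA.eigenvalues i ^ 3 - t * hA.eigenvalues i) • v = 0 := by
    have hv3 : (A * A * A) *ᵥ v = hA.eigenvalues i ^ 3 • v := by
      simp only [← mulVec_mulVec, hv, mulVec_smul, smul_smul]
      ring_nf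
    rw [sub_smul, ← hv3, h, smul_mulVec, hv, smul_smul, sub_self]
  exact sub_eq_zero.mp ((smul_eq_zero.mp key).resolve_right hv0)

lemma sum_abs_eigenvalues_of_mul_mul_self_eq_smul (hA : A.IsHermitian) {a k : ℝ} (ha : 0 ≤ a)
    (hcube : A * A * A = a ^ 2 • A) (htr : (A * A).trace = k * a ^ 2) :
    ∑ i, |hA.eigenvalues i| = k * a := by
  have habs (i : n) : a * |hA.eigenvalues i| = hA.eigenvalues i ^ 2 :=
    mul_abs_eq_sq_of_pow_three_eq ha (hA.eigenvalues_pow_three_of_mul_mul_self_eq_smul hcube i)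
  have hsq : ∑ i, hA.eigenvalues i ^ 2 = k * a ^ 2 := by
    rw [hA.trace_mul_self] at htr
    exact_mod_cast htr
  rcases ha.eq_or_lt with rfl | ha
  · have hzero (i : n) : hA.eigenvalues i = 0 := by simpa using (habs i).symm
    simp [hzero]
  · apply mul_left_cancel₀ ha.ne'
    rw [Finset.mul_sum, Finset.sum_congr rfl fun i _ ↦ habs i, hsq]
    ring

end Matrix.IsHermitian

namespace SimpleGraph

open Fintype

lemma degree_inl_completeBipartiteGraph {V W : Type*} [Fintype W] (v : V)
    [Fintype ((completeBipartiteGraph V W).neighborSet (.inl v))] :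
    (completeBipartiteGraph V W).degree (.inl v) = card W := by
  have : (completeBipartiteGraph V W).neighborSet (.inl v) = Set.range Sum.inr := by
    ext (w | w) <;> simp
  rw [← card_neighborSet_eq_degree, card_eq_nat_card, this,
    Nat.card_range_of_injective Sum.inr_injective, Nat.card_eq_fintype_card]

lemma degree_inr_completeBipartiteGraph {V W : Type*} [Fintype V] (w : W)
    [Fintype ((completeBipartiteGraph V W).neighborSet (.inr w))] :
    (completeBipartiteGraph V W).degree (.inr w) = card V := by
  have : (completeBipartiteGraph V W).neighborSet (.inr w) = Set.range Sum.inl := by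
    ext (v | v) <;> simp
  rw [← card_neighborSet_eq_degree, card_eq_nat_card, this,
    Nat.card_range_of_injective Sum.inl_injective, Nat.card_eq_fintype_card]

variable {V W : Type*} [Fintype V] [Fintype W] [DecidableRel (completeBipartiteGraph V W).Adj]

lemma adjMatrix_completeBipartiteGraph_mul_self_mul_self :
    (completeBipartiteGraph V W).adjMatrix ℝ * (completeBipartiteGraph V W).adjMatrix ℝ *
        (completeBipartiteGraph V W).adjMatrix ℝ =
      (card V * card W : ℝ) • (completeBipartiteGraph V W).adjMatrix ℝ := by
  ext (v | w) (v' | w') <;>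
    simp [Matrix.mul_apply, Fintype.sum_sum_type, adjMatrix_apply, mul_comm]

lemma trace_adjMatrix_completeBipartiteGraph_mul_self :
    ((completeBipartiteGraph V W).adjMatrix ℝ * (completeBipartiteGraph V W).adjMatrix ℝ).trace =
      2 * card V * card W := by
  simp only [Matrix.trace, Matrix.diag_apply, adjMatrix_mul_self_apply_self,
    Fintype.sum_sum_type, degree_inl_completeBipartiteGraph, degree_inr_completeBipartiteGraph,
    Finset.sum_const, Finset.card_univ, nsmul_eq_mul]
  ring

lemma esoMatrix_completeBipartiteGraph :
    esoMatrix (completeBipartiteGraph V W) =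
      (((card V : ℝ) + card W) * √((card V : ℝ) ^ 2 + (card W : ℝ) ^ 2)) •
        (completeBipartiteGraph V W).adjMatrix ℝ := by
  ext (v | w) (v' | w') <;>
    simp [esoMatrix, adjMatrix_apply, degree_inl_completeBipartiteGraph,
      degree_inr_completeBipartiteGraph, add_comm]

theorem esoEnergy_completeBipartiteGraph (V W : Type*) [Fintype V] [Fintype W]
    [DecidableEq V] [DecidableEq W] :
    esoEnergy (completeBipartiteGraph V W) =
      2 * ((card V : ℝ) + card W) *
        √((card V : ℝ) * card W * ((card V : ℝ) ^ 2 + (card W : ℝ) ^ 2)) := by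
  classical
  set c : ℝ := ((card V : ℝ) + card W) * √((card V : ℝ) ^ 2 + (card W : ℝ) ^ 2) with hc
  set a : ℝ := c * √((card V : ℝ) * card W)
  have ha : a ^ 2 = c ^ 2 * (card V * card W) := by rw [mul_pow, sq_sqrt (by positivity)]
  have hcube : esoMatrix (completeBipartiteGraph V W) * esoMatrix (completeBipartiteGraph V W) *
      esoMatrix (completeBipartiteGraph V W) = a ^ 2 • esoMatrix (completeBipartiteGraph V W) := by
    rw [esoMatrix_completeBipartiteGraph, smul_mul_smul, smul_mul_smul,
      adjMatrix_completeBipartiteGraph_mul_self_mul_self, smul_smul, smul_smul, ha, hc]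
    ring_nf
  have htr : (esoMatrix (completeBipartiteGraph V W) *
      esoMatrix (completeBipartiteGraph V W)).trace = 2 * a ^ 2 := by
    rw [esoMatrix_completeBipartiteGraph, smul_mul_smul, Matrix.trace_smul,
      trace_adjMatrix_completeBipartiteGraph_mul_self, smul_eq_mul, ha]
    ring
  rw [esoEnergy, (esoMatrix_isHermitian _).sum_abs_eigenvalues_of_mul_mul_self_eq_smul
    (by positivity) hcube htr, sqrt_mul' _ (by positivity)]
  ring

end SimpleGraph

theorem eso_energy_completeBipartite_general (m n : ℕ) :
    esoEnergy (completeBipartiteGraph (Fin m) (Fin n)) =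
      2 * ((m : ℝ) + n) * Real.sqrt ((m : ℝ) * n * ((m : ℝ) ^ 2 + (n : ℝ) ^ 2)) := by
  simpa using SimpleGraph.esoEnergy_completeBipartiteGraph (Fin m) (Fin n)

theorem eso_energy_completeBipartite (m n : ℕ) (hm : 2 ≤ m) (hn : 2 ≤ n) :
    esoEnergy (completeBipartiteGraph (Fin m) (Fin n)) =
      2 * ((m : ℝ) + n) * Real.sqrt ((m : ℝ) * n * ((m : ℝ) ^ 2 + (n : ℝ) ^ 2)) :=
  eso_energy_completeBipartite_general m n
end
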